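/- arXiv:1805.11187 — 3 statements merged into one kernel-verified Lean document; each statement's English description precedes it below -/
import Mathlib

section
/- Let $s \in C^2(X \times \bar Y)$ be non-degenerate (i.e. $D^2_{xy}s(x,y)$, an $m \times n$ matrix with $m \ge n$, has rank $n$ everywhere). Suppose $v$ is twice differentiable at $y = F(x)$, $F$ is differentiable at $x$, and $[D^2 v(F(x)) - D^2_{yy}s(x,F(x))] DF(x) = D^2_{xy}s(x,F(x))^T$. Then the $n \times n$ matrix $D^2 v(F(x)) - D^2_{yy}s(x,F(x))$ is invertible, the $n$-dimensional Jacobian $JF(x) := \det^{1/2}[DF(x) DF(x)^T]$ is positive, and $JF(x) = \sqrt{\det[D^2_{xy}s\, (D^2_{xy}s)^T]} / \det[D^2 v(F(x)) - D^2_{yy}s(x,F(x))]$, where the matrices are evaluated at $(x, F(x))$. -/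
/-!
With `S = D²_xy s`, symmetry of `M` turns `M DF = Sᵀ` into `M (DF DFᵀ) M = Sᵀ S`, so
`det M ^ 2 * det (DF DFᵀ) = det (Sᵀ S)`. Non-degeneracy makes `Sᵀ S` positive definite, so its
determinant is positive; this forces `det M ≠ 0`, hence `det M > 0` as `M ≥ 0`, and the Jacobian
is read off by taking square roots.
-/

namespace Matrix

variable {m n R : Type*} [Fintype n]

theorem mulVec_injective_of_rank_eq_card {K : Type*} [Field K] {A : Matrix m n K}
    (h : A.rank = Fintype.card n) : Function.Injective A.mulVec := by
  have hker := A.mulVecLin.finrank_range_add_finrank_ker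
  rw [← rank, h, Module.finrank_fintype_fun_eq_card, Nat.add_eq_left,
    Submodule.finrank_eq_zero] at hker
  rw [← coe_mulVecLin, ← LinearMap.ker_eq_bot, hker]

theorem det_transpose_mul_self_pos_of_rank_eq_card [Fintype m] [DecidableEq n]
    {A : Matrix m n ℝ} (h : A.rank = Fintype.card n) : 0 < (Aᵀ * A).det := by
  simpa using (PosDef.conjTranspose_mul_self A (mulVec_injective_of_rank_eq_card h)).det_pos

theorem IsSymm.mul_mul_transpose_mul [Fintype m] [CommSemiring R] {M : Matrix n n R}
    (hM : M.IsSymm) (D : Matrix n m R) : M * (D * Dᵀ) * M = (M * D) * (M * D)ᵀ := by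
  rw [transpose_mul, hM.eq, Matrix.mul_assoc, Matrix.mul_assoc, Matrix.mul_assoc]

theorem IsSymm.det_sq_mul_det_mul_transpose [Fintype m] [CommRing R] [DecidableEq n]
    {M : Matrix n n R} (hM : M.IsSymm) {D : Matrix n m R} {S : Matrix m n R} (h : M * D = Sᵀ) :
    M.det ^ 2 * (D * Dᵀ).det = (Sᵀ * S).det := by
  obtain rfl : S = (M * D)ᵀ := by rw [h, transpose_transpose]
  rw [transpose_transpose, ← hM.mul_mul_transpose_mul, det_mul, det_mul]
  ring

end Matrix

theorem stmt2_general {m n : ℕ}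
    (M : Matrix (Fin n) (Fin n) ℝ)
    (DF : Matrix (Fin n) (Fin m) ℝ)
    (Sxy : Matrix (Fin m) (Fin n) ℝ)
    (hrank : Sxy.rank = n)
    (hpos : M.PosSemidef)
    (heq : M * DF = Sxy.transpose) :
    IsUnit M.det ∧
    0 < Real.sqrt (DF * DF.transpose).det ∧
    Real.sqrt (DF * DF.transpose).det
      = Real.sqrt (Sxy.transpose * Sxy).det / M.det := by
  have hA : 0 < (Sxy.transpose * Sxy).det :=
    Matrix.det_transpose_mul_self_pos_of_rank_eq_card (by rw [hrank, Fintype.card_fin])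
  have hdet : M.det ^ 2 * (DF * DF.transpose).det = (Sxy.transpose * Sxy).det :=
    (Matrix.isHermitian_iff_isSymm.mp hpos.isHermitian).det_sq_mul_det_mul_transpose heq
  have hM : 0 < M.det := hpos.det_nonneg.lt_of_ne' fun h0 ↦ by
    rw [h0, zero_pow two_ne_zero, zero_mul] at hdet
    exact hA.ne hdet
  have hJ : (DF * DF.transpose).det = (Sxy.transpose * Sxy).det / M.det ^ 2 := by
    rw [← hdet, mul_div_cancel_left₀ _ (pow_ne_zero 2 hM.ne')]
  refine ⟨hM.ne'.isUnit, Real.sqrt_pos.mpr (hJ ▸ by positivity), ?_⟩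
  rw [hJ, Real.sqrt_div hA.le, Real.sqrt_sq hM.le]

/-- Jacobian identity for unequal-dimensional optimal transport: if
`M = D²v(F x) - D²_yy s(x, F x)` is positive semidefinite, `D²_xy s` has full rank `n ≤ m`,
and `M ⬝ DF = (D²_xy s)ᵀ`, then `M` is invertible, the `n`-dimensional Jacobian
`JF = √det(DF DFᵀ)` is positive, and `JF = √det((D²_xy s)ᵀ D²_xy s) / det M`. -/
theorem stmt2 {m n : ℕ} (hmn : n ≤ m)
    (M : Matrix (Fin n) (Fin n) ℝ)
    (DF : Matrix (Fin n) (Fin m) ℝ)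
    (Sxy : Matrix (Fin m) (Fin n) ℝ)
    (hrank : Sxy.rank = n)
    (hpos : M.PosSemidef)
    (heq : M * DF = Sxy.transpose) :
    IsUnit M.det ∧
    0 < Real.sqrt (DF * DF.transpose).det ∧
    Real.sqrt (DF * DF.transpose).det
      = Real.sqrt (Sxy.transpose * Sxy).det / M.det :=
  stmt2_general M DF Sxy hrank hpos heq
end

section
/- Let $Q, Q'$ be symmetric $n \times n$ matrices and $S$ a symmetric $n \times n$ matrix with $0 < Q - S \le \Theta I$ and $Q' \ge Q$. Then $\det[Q' - S] \ge \det[Q - S] \cdot (1 + \Theta^{-1} \operatorname{tr}[Q' - Q])$. -/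
/-!
Factor `det (A + B) = det A * det (1 + A⁻¹ B)`. Writing `B = Tᴴ T`, the Weinstein–Aronszajn
identity gives `det (1 + A⁻¹ B) = det (1 + T A⁻¹ Tᴴ)` with `T A⁻¹ Tᴴ` positive semidefinite, so
in its eigenvalues `λᵢ ≥ 0` this is `∏ (1 + λᵢ) ≥ 1 + ∑ λᵢ = 1 + tr (A⁻¹ B)`. Finally `A ≤ Θ`
gives `A⁻¹ ≥ Θ⁻¹` (conjugate by `A^{-1/2}`), hence `tr (A⁻¹ B) ≥ Θ⁻¹ tr B`.
-/

open Matrix Unitary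
open scoped ComplexOrder

theorem Finset.one_add_sum_le_prod_one_add {ι R : Type*} [CommSemiring R] [PartialOrder R]
    [IsOrderedRing R] (s : Finset ι) {f : ι → R} (hf : ∀ i ∈ s, 0 ≤ f i) :
    1 + ∑ i ∈ s, f i ≤ ∏ i ∈ s, (1 + f i) := by
  classical
  induction s using Finset.induction_on with
  | empty => simp
  | insert a s ha ih =>
    rw [Finset.sum_insert ha, Finset.prod_insert ha]
    have hfa : 0 ≤ f a := hf a (Finset.mem_insert_self a s)
    have hs : 0 ≤ ∑ i ∈ s, f i := Finset.sum_nonneg fun i hi => hf i (Finset.mem_insert_of_mem hi)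
    calc 1 + (f a + ∑ i ∈ s, f i) ≤ 1 + (f a + ∑ i ∈ s, f i) + f a * ∑ i ∈ s, f i :=
          le_add_of_nonneg_right (mul_nonneg hfa hs)
      _ = (1 + f a) * (1 + ∑ i ∈ s, f i) := by ring
      _ ≤ (1 + f a) * ∏ i ∈ s, (1 + f i) :=
          mul_le_mul_of_nonneg_left (ih fun i hi => hf i (Finset.mem_insert_of_mem hi))
            (add_nonneg zero_le_one hfa)

namespace Matrix

variable {𝕜 n : Type*} [RCLike 𝕜] [Fintype n] [DecidableEq n]

theorem PosSemidef.exists_eq_conjTranspose_mul_self {B : Matrix n n 𝕜} (hB : B.PosSemidef) :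
    ∃ T : Matrix n n 𝕜, B = Tᴴ * T := by
  open scoped MatrixOrder in
  exact CStarAlgebra.nonneg_iff_eq_star_mul_self.mp hB.nonneg

theorem PosSemidef.trace_mul_nonneg {A B : Matrix n n 𝕜} (hA : A.PosSemidef)
    (hB : B.PosSemidef) : 0 ≤ (A * B).trace := by
  obtain ⟨T, rfl⟩ := hB.exists_eq_conjTranspose_mul_self
  rw [← Matrix.mul_assoc, trace_mul_comm]
  simpa only [Matrix.mul_assoc] using (hA.mul_mul_conjTranspose_same T).trace_nonneg

theorem PosSemidef.one_add_trace_le_det_one_add {M : Matrix n n 𝕜} (hM : M.PosSemidef) :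
    1 + M.trace ≤ (1 + M).det := by
  set U := hM.1.eigenvectorUnitary
  have hdiag : 1 + M = conjStarAlgAut 𝕜 _ U (diagonal fun i => 1 + (hM.1.eigenvalues i : 𝕜)) := by
    conv_lhs => rw [hM.1.spectral_theorem, ← map_one (conjStarAlgAut 𝕜 _ U), ← map_add,
      ← diagonal_one, diagonal_add]
    rfl
  rw [hdiag, conjStarAlgAut_apply,
    det_conj_of_mul_eq_one (Unitary.mul_star_self_of_mem U.2) (Unitary.star_mul_self_of_mem U.2),
    det_diagonal, hM.1.trace_eq_sum_eigenvalues]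
  exact Finset.one_add_sum_le_prod_one_add _ fun i _ =>
    RCLike.ofReal_nonneg.mpr (hM.eigenvalues_nonneg i)

theorem PosSemidef.one_add_trace_mul_le_det_one_add_mul {A B : Matrix n n 𝕜}
    (hA : A.PosSemidef) (hB : B.PosSemidef) : 1 + (A * B).trace ≤ (1 + A * B).det := by
  obtain ⟨T, rfl⟩ := hB.exists_eq_conjTranspose_mul_self
  rw [← Matrix.mul_assoc, trace_mul_comm, det_one_add_mul_comm, ← Matrix.mul_assoc]
  exact (hA.mul_mul_conjTranspose_same T).one_add_trace_le_det_one_add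

theorem PosDef.det_mul_one_add_trace_inv_mul_le_det_add {A B : Matrix n n 𝕜}
    (hA : A.PosDef) (hB : B.PosSemidef) : A.det * (1 + (A⁻¹ * B).trace) ≤ (A + B).det := by
  have hfactor : A + B = A * (1 + A⁻¹ * B) := by
    rw [Matrix.mul_add, Matrix.mul_one,
      mul_nonsing_inv_cancel_left _ _ (A.isUnit_iff_isUnit_det.mp hA.isUnit)]
  rw [hfactor, det_mul]
  exact mul_le_mul_of_nonneg_left (hA.inv.posSemidef.one_add_trace_mul_le_det_one_add_mul hB)
    hA.det_pos.le

theorem PosDef.posSemidef_inv_sub_inv_smul_one {A : Matrix n n 𝕜} (hA : A.PosDef) {c : ℝ}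
    (hc : 0 < c) (h : (c • 1 - A).PosSemidef) : (A⁻¹ - c⁻¹ • 1).PosSemidef := by
  open scoped MatrixOrder in
  obtain ⟨R, hRR, hRH, hR⟩ : ∃ R : Matrix n n 𝕜, R * R = A ∧ Rᴴ = R ∧ IsUnit R :=
    ⟨CFC.sqrt A, CFC.sqrt_mul_sqrt_self A hA.posSemidef.nonneg,
      (CFC.sqrt_nonneg A).posSemidef.1, (CFC.isUnit_sqrt_iff A).mpr hA.isUnit⟩
  have hRdet := R.isUnit_iff_isUnit_det.mp hR
  have hconj : R⁻¹ * (c • 1 - A) * R⁻¹ᴴ = c • A⁻¹ - 1 := by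
    rw [conjTranspose_nonsing_inv, hRH, ← hRR, Matrix.mul_inv_rev, Matrix.mul_sub, Matrix.sub_mul,
      Matrix.mul_smul, Matrix.smul_mul, Matrix.mul_one, nonsing_inv_mul_cancel_left _ _ hRdet,
      mul_nonsing_inv _ hRdet]
  have := (h.mul_mul_conjTranspose_same R⁻¹).smul (inv_nonneg.mpr hc.le)
  rwa [hconj, smul_sub, smul_smul, inv_mul_cancel₀ hc.ne', one_smul] at this

theorem PosDef.inv_smul_trace_le_trace_inv_mul {A B : Matrix n n 𝕜} (hA : A.PosDef)
    (hB : B.PosSemidef) {c : ℝ} (hc : 0 < c) (h : (c • 1 - A).PosSemidef) :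
    c⁻¹ • B.trace ≤ (A⁻¹ * B).trace := by
  have := (hA.posSemidef_inv_sub_inv_smul_one hc h).trace_mul_nonneg hB
  rwa [Matrix.sub_mul, trace_sub, Matrix.smul_mul, trace_smul, Matrix.one_mul, sub_nonneg] at this

end Matrix

theorem stmt3_general {n : ℕ} (Q Q' S : Matrix (Fin n) (Fin n) ℝ) (Θ : ℝ) (hΘ : 0 < Θ)
    (h1 : (Q - S).PosDef)
    (h2 : (Θ • (1 : Matrix (Fin n) (Fin n) ℝ) - (Q - S)).PosSemidef)
    (h3 : (Q' - Q).PosSemidef) :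
    (Q - S).det * (1 + Θ⁻¹ * (Q' - Q).trace) ≤ (Q' - S).det := by
  have hsplit : Q' - S = (Q - S) + (Q' - Q) := by abel
  calc (Q - S).det * (1 + Θ⁻¹ * (Q' - Q).trace)
      ≤ (Q - S).det * (1 + ((Q - S)⁻¹ * (Q' - Q)).trace) := by
        gcongr
        · exact h1.det_pos.le
        · exact h1.inv_smul_trace_le_trace_inv_mul h3 hΘ h2
    _ ≤ (Q' - S).det := hsplit ▸ h1.det_mul_one_add_trace_inv_mul_le_det_add h3

/-- Determinant inequality underlying strict ellipticity: for symmetric matrices with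
`0 < Q - S ≤ Θ I` and `Q' ≥ Q`, one has
`det(Q' - S) ≥ det(Q - S) (1 + Θ⁻¹ tr(Q' - Q))`. -/
theorem stmt3 {n : ℕ} (Q Q' S : Matrix (Fin n) (Fin n) ℝ) (Θ : ℝ) (hΘ : 0 < Θ)
    (hQ : Q.IsSymm) (hQ' : Q'.IsSymm) (hS : S.IsSymm)
    (h1 : (Q - S).PosDef)
    (h2 : (Θ • (1 : Matrix (Fin n) (Fin n) ℝ) - (Q - S)).PosSemidef)
    (h3 : (Q' - Q).PosSemidef) :
    (Q - S).det * (1 + Θ⁻¹ * (Q' - Q).trace) ≤ (Q' - S).det :=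
  stmt3_general Q Q' S Θ hΘ h1 h2 h3
end

section
/- Let $v : Y \to \mathbb{R}$ with $Y \subset \mathbb{R}^n$ open, and let $s \in C^2(X \times \bar Y)$. Suppose at $(x,y) \in X \times Y$ the matrix $D^2 v(y) - D^2_{yy} s(x,y)$ is positive definite, $v$ is twice differentiable at $y$, and $y$ lies in the contact set $\partial_s u(x) := \{y' \in \bar Y : u(x) + v(y') = s(x,y')\}$ where $u = v^s$. Then there is no $C^1$ curve $t \in [0,1] \mapsto y(t) \in \partial_s u(x)$ with $y(0) = y$ and $y'(0) \ne 0$; i.e., $y$ is an isolated point among $C^1$ curves in $\partial_s u(x)$. -/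
/-!
Put `f = v - s x`. The inequality `u x ≥ s x y' - v y'` with equality at `y` makes `y` an interior
minimum of `f`, so the first-order term of the second-order expansion of `f` at `y` vanishes.
Along a curve `γ` with `γ 0 = y`, `γ'(0) = ẏ`, this expansion gives
`(f (γ t) - f y) / t² → ½ (Q - S) ẏ ẏ` as `t → 0⁺`. On the contact set `f (γ t) = f y`,
so `(Q - S) ẏ ẏ = 0`, which positive definiteness forbids unless `ẏ = 0`.
-/

open Set Topology Asymptotics Filter

variable {E : Type*} [NormedAddCommGroup E] [NormedSpace ℝ E]

def HasSecondOrderExpansionAt (f : E → ℝ) (p : E →L[ℝ] ℝ) (B : E →L[ℝ] E →L[ℝ] ℝ) (y : E) :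
    Prop :=
  (fun y' => f y' - f y - p (y' - y) - (1 / 2) * B (y' - y) (y' - y)) =o[𝓝 y]
    fun y' => ‖y' - y‖ ^ 2

namespace HasSecondOrderExpansionAt

variable {f g : E → ℝ} {p q : E →L[ℝ] ℝ} {A B : E →L[ℝ] E →L[ℝ] ℝ} {y : E}

theorem sub (hf : HasSecondOrderExpansionAt f p A y) (hg : HasSecondOrderExpansionAt g q B y) :
    HasSecondOrderExpansionAt (fun z => f z - g z) (p - q) (A - B) y :=
  (IsLittleO.sub hf hg).congr_left fun z => by
    simp only [sub_apply]
    ring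

theorem hasFDerivAt (hf : HasSecondOrderExpansionAt f p B y) : HasFDerivAt f p y := by
  have hquad : (fun z => (1 / 2) * B (z - y) (z - y)) =O[𝓝 y] fun z => ‖z - y‖ ^ 2 :=
    (B.isBoundedBilinearMap.isBigO_comp.const_mul_left _).congr_right fun z => (sq _).symm
  have hsq : (fun z => ‖z - y‖ ^ 2) =o[𝓝 y] fun z => z - y :=
    (isLittleO_norm_pow_id one_lt_two).comp_tendsto (tendsto_sub_nhds_zero_iff.2 tendsto_id)
  refine hasFDerivAt_iff_isLittleO.2 (((hf.isBigO.add hquad).trans_isLittleO hsq).congr_left ?_)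
  intro z
  ring

theorem tendsto_comp_sub_div_sq {γ : ℝ → E} {ydot : E}
    (hf : HasSecondOrderExpansionAt f 0 B y) (hγ : HasDerivWithinAt γ ydot (Ioi 0) 0)
    (hγ0 : γ 0 = y) :
    Tendsto (fun t => (f (γ t) - f y) / t ^ 2) (𝓝[>] 0) (𝓝 ((1 / 2) * B ydot ydot)) := by
  have hslope : Tendsto (slope γ 0) (𝓝[>] 0) (𝓝 ydot) :=
    (hasDerivWithinAt_iff_tendsto_slope' (lt_irrefl 0)).1 hγ
  have hγy : Tendsto γ (𝓝[>] 0) (𝓝 y) := hγ0 ▸ hγ.continuousWithinAt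
  have hO : (fun t => ‖γ t - y‖ ^ 2) =O[𝓝[>] 0] fun t => t ^ 2 := by
    simpa [hγ0] using hγ.hasFDerivWithinAt.isBigO_sub.norm_left.pow 2
  have hrem : Tendsto (fun t => (f (γ t) - f y - (1 / 2) * B (γ t - y) (γ t - y)) / t ^ 2)
      (𝓝[>] 0) (𝓝 0) := by
    refine ((hf.comp_tendsto hγy).trans_isBigO hO).tendsto_div_nhds_zero.congr fun t => ?_
    simp
  have hquad : Tendsto (fun t => (1 / 2) * B (slope γ 0 t) (slope γ 0 t)) (𝓝[>] 0)
      (𝓝 ((1 / 2) * B ydot ydot)) :=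
    ((B.continuous₂.comp (continuous_id.prodMk continuous_id)).tendsto ydot |>.comp hslope
      |>.const_mul _)
  -- For `t > 0`, `γ t - y = t • slope γ 0 t`, so the quadratic term over `t²` is `B` at the slope.
  refine (zero_add ((1 / 2) * B ydot ydot) ▸ hrem.add hquad).congr' ?_
  filter_upwards [self_mem_nhdsWithin] with t (ht : 0 < t)
  rw [slope_def_module, hγ0, sub_zero]
  simp only [map_smul, smul_apply, smul_eq_mul]
  field_simp
  ring

end HasSecondOrderExpansionAt

theorem stmt12_general {m n : ℕ}
    (Y : Set (EuclideanSpace ℝ (Fin n)))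
    (hY : IsOpen Y)
    (s : EuclideanSpace ℝ (Fin m) → EuclideanSpace ℝ (Fin n) → ℝ)
    (u : EuclideanSpace ℝ (Fin m) → ℝ) (v : EuclideanSpace ℝ (Fin n) → ℝ)
    (x : EuclideanSpace ℝ (Fin m)) (y : EuclideanSpace ℝ (Fin n))
    (hy : y ∈ Y)
    (hge : ∀ y' ∈ closure Y, s x y' - v y' ≤ u x)
    (hcontact : u x + v y = s x y)
    (pv ps : EuclideanSpace ℝ (Fin n) →L[ℝ] ℝ)
    (Q S : EuclideanSpace ℝ (Fin n) →L[ℝ] EuclideanSpace ℝ (Fin n) →L[ℝ] ℝ)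
    (hv : (fun y' => v y' - v y - pv (y' - y) - (1 / 2) * Q (y' - y) (y' - y))
        =o[𝓝 y] fun y' => ‖y' - y‖ ^ 2)
    (hsT : (fun y' => s x y' - s x y - ps (y' - y) - (1 / 2) * S (y' - y) (y' - y))
        =o[𝓝 y] fun y' => ‖y' - y‖ ^ 2)
    (hpd : ∀ w : EuclideanSpace ℝ (Fin n), w ≠ 0 → 0 < Q w w - S w w) :
    ¬ ∃ (γ : ℝ → EuclideanSpace ℝ (Fin n)) (ydot : EuclideanSpace ℝ (Fin n)),
      ContDiffOn ℝ 1 γ (Set.Icc 0 1) ∧ γ 0 = y ∧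
      (∀ t ∈ Set.Icc (0 : ℝ) 1, γ t ∈ closure Y ∧ u x + v (γ t) = s x (γ t)) ∧
      HasDerivWithinAt γ ydot (Set.Icc 0 1) 0 ∧ ydot ≠ 0 := by
  rintro ⟨γ, ydot, -, hγ0, hγ, hγ', hydot⟩
  have hexp : HasSecondOrderExpansionAt (fun z => v z - s x z) (pv - ps) (Q - S) y :=
    HasSecondOrderExpansionAt.sub hv hsT
  have hmin : IsLocalMin (fun z => v z - s x z) y := by
    filter_upwards [hY.mem_nhds hy] with z hz
    linarith [hge z (subset_closure hz)]
  rw [hmin.hasFDerivAt_eq_zero hexp.hasFDerivAt] at hexp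
  have hIcc : Icc (0 : ℝ) 1 ∈ 𝓝[>] 0 :=
    mem_of_superset (Ioo_mem_nhdsGT one_pos) Ioo_subset_Icc_self
  have hlim := hexp.tendsto_comp_sub_div_sq (hγ'.mono_of_mem_nhdsWithin hIcc) hγ0
  have hflat : (1 / 2) * (Q - S) ydot ydot = 0 := by
    refine tendsto_nhds_unique hlim (tendsto_const_nhds.congr' ?_)
    filter_upwards [hIcc] with t ht
    rw [eq_comm, div_eq_zero_iff]
    left
    linarith [(hγ t ht).2]
  have := hpd ydot hydot
  simp only [sub_apply] at hflat
  linarith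

/-- If `D²v(y) - D²_yy s(x,y)` is positive definite at a contact point `y ∈ ∂_s u(x)`, then
no `C¹` curve inside the contact set can depart from `y` with nonzero velocity. -/
theorem stmt12 {m n : ℕ}
    (X : Set (EuclideanSpace ℝ (Fin m))) (Y : Set (EuclideanSpace ℝ (Fin n)))
    (hY : IsOpen Y)
    (s : EuclideanSpace ℝ (Fin m) → EuclideanSpace ℝ (Fin n) → ℝ)
    (u : EuclideanSpace ℝ (Fin m) → ℝ) (v : EuclideanSpace ℝ (Fin n) → ℝ)
    (x : EuclideanSpace ℝ (Fin m)) (y : EuclideanSpace ℝ (Fin n))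
    (hx : x ∈ X) (hy : y ∈ Y)
    (hge : ∀ y' ∈ closure Y, s x y' - v y' ≤ u x)
    (hcontact : u x + v y = s x y)
    (pv ps : EuclideanSpace ℝ (Fin n) →L[ℝ] ℝ)
    (Q S : EuclideanSpace ℝ (Fin n) →L[ℝ] EuclideanSpace ℝ (Fin n) →L[ℝ] ℝ)
    (hv : (fun y' => v y' - v y - pv (y' - y) - (1 / 2) * Q (y' - y) (y' - y))
        =o[𝓝 y] fun y' => ‖y' - y‖ ^ 2)
    (hsT : (fun y' => s x y' - s x y - ps (y' - y) - (1 / 2) * S (y' - y) (y' - y))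
        =o[𝓝 y] fun y' => ‖y' - y‖ ^ 2)
    (hpd : ∀ w : EuclideanSpace ℝ (Fin n), w ≠ 0 → 0 < Q w w - S w w) :
    ¬ ∃ (γ : ℝ → EuclideanSpace ℝ (Fin n)) (ydot : EuclideanSpace ℝ (Fin n)),
      ContDiffOn ℝ 1 γ (Set.Icc 0 1) ∧ γ 0 = y ∧
      (∀ t ∈ Set.Icc (0 : ℝ) 1, γ t ∈ closure Y ∧ u x + v (γ t) = s x (γ t)) ∧
      HasDerivWithinAt γ ydot (Set.Icc 0 1) 0 ∧ ydot ≠ 0 :=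
  stmt12_general Y hY s u v x y hy hge hcontact pv ps Q S hv hsT hpd
end
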